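/- Let μ > 0. Then C := ∑_{w ∈ ℤ²} exp(−(μ/3)‖w‖) is finite, and for all sets U, V ⊆ ℝ² and all x, y ∈ ℤ²: ∑_{z ∈ ℤ²} exp(−μ(‖x−z‖ + d(x,∂U) + d(z,∂U))) · exp(−μ(‖z−y‖ + d(z,∂V) + d(y,∂V))) ≤ C · exp(−(μ/3)(‖x−y‖ + d(x,∂U) + d(y,∂U) + d(x,∂V) + d(y,∂V))). -/

import Mathlib

open Metric Set

noncomputable section

/-- The canonical embedding of `ℤ²` into the Euclidean plane. -/
def emb (p : ℤ × ℤ) : EuclideanSpace ℝ (Fin 2) :=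
  (WithLp.equiv 2 (Fin 2 → ℝ)).symm ![(p.1 : ℝ), (p.2 : ℝ)]

lemma emb_add (p q : ℤ × ℤ) : emb (p + q) = emb p + emb q := by
  ext i
  fin_cases i <;> simp [emb] <;> push_cast <;> ring

lemma abs_le_norm_emb (p : ℤ × ℤ) : (|(p.1:ℝ)| ≤ ‖emb p‖) ∧ (|(p.2:ℝ)| ≤ ‖emb p‖) := by
  have h : ‖emb p‖ = Real.sqrt ((p.1:ℝ)^2 + (p.2:ℝ)^2) := by
    rw [EuclideanSpace.norm_eq]
    simp [emb, Fin.sum_univ_two]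
  constructor <;> rw [h, ← Real.sqrt_sq_eq_abs] <;>
    exact Real.sqrt_le_sqrt (by nlinarith [sq_nonneg ((p.1:ℝ)), sq_nonneg ((p.2:ℝ))])

lemma summable_aux {c : ℝ} (hc : 0 < c) :
    Summable (fun w : ℤ × ℤ => Real.exp (-c * ‖emb w‖)) := by
  have hf : Summable (fun n : ℤ => Real.exp (-(c/2) * |(n:ℝ)|)) := by
    have hnat : Summable (fun n : ℕ => Real.exp (-(c/2) * n)) := by
      have : ∀ n : ℕ, Real.exp (-(c/2) * n) = (Real.exp (-(c/2)))^n := by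
        intro n; rw [← Real.exp_nat_mul]; ring_nf
      rw [funext this]
      exact summable_geometric_of_lt_one (Real.exp_nonneg _)
        (Real.exp_lt_one_iff.2 (by linarith))
    apply Summable.of_nat_of_neg <;> · exact hnat.congr (by intro n; push_cast; simp)
  have := hf.mul_of_nonneg hf (fun n => Real.exp_nonneg _) (fun n => Real.exp_nonneg _)
  apply this.of_nonneg_of_le (fun w => Real.exp_nonneg _)
  intro w
  rw [← Real.exp_add]
  apply Real.exp_le_exp.2
  have h1 := (abs_le_norm_emb w).1
  have h2 := (abs_le_norm_emb w).2
  nlinarith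

theorem kernel_product_sum_estimate (μ : ℝ) (hμ : 0 < μ) :
    Summable (fun w : ℤ × ℤ => Real.exp (-(μ / 3) * ‖emb w‖)) ∧
    ∀ (U V : Set (EuclideanSpace ℝ (Fin 2))) (x y : ℤ × ℤ),
      (∑' z : ℤ × ℤ,
        Real.exp (-μ * (‖emb x - emb z‖ + infDist (emb x) (frontier U)
          + infDist (emb z) (frontier U)))
        * Real.exp (-μ * (‖emb z - emb y‖ + infDist (emb z) (frontier V)
          + infDist (emb y) (frontier V))))
      ≤ (∑' w : ℤ × ℤ, Real.exp (-(μ / 3) * ‖emb w‖))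
        * Real.exp (-(μ / 3) * (‖emb x - emb y‖
          + infDist (emb x) (frontier U) + infDist (emb y) (frontier U)
          + infDist (emb x) (frontier V) + infDist (emb y) (frontier V))) := by
  have hc : (0:ℝ) < μ/3 := by linarith
  have hsum := summable_aux hc
  refine ⟨hsum, fun U V x y => ?_⟩
  set E := Real.exp (-(μ / 3) * (‖emb x - emb y‖
      + infDist (emb x) (frontier U) + infDist (emb y) (frontier U)
      + infDist (emb x) (frontier V) + infDist (emb y) (frontier V))) with hE
  -- pointwise bound
  have key : ∀ z : ℤ × ℤ,
      Real.exp (-μ * (‖emb x - emb z‖ + infDist (emb x) (frontier U)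
          + infDist (emb z) (frontier U)))
        * Real.exp (-μ * (‖emb z - emb y‖ + infDist (emb z) (frontier V)
          + infDist (emb y) (frontier V)))
      ≤ Real.exp (-(μ/3) * ‖emb z - emb x‖) * E := by
    intro z
    rw [← Real.exp_add, hE, ← Real.exp_add]
    apply Real.exp_le_exp.2
    have t1 : ‖emb x - emb y‖ ≤ ‖emb x - emb z‖ + ‖emb z - emb y‖ :=
      norm_sub_le_norm_sub_add_norm_sub _ _ _
    have t2 : infDist (emb y) (frontier U) ≤ infDist (emb z) (frontier U)
        + dist (emb y) (emb z) := infDist_le_infDist_add_dist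
    have t3 : infDist (emb x) (frontier V) ≤ infDist (emb z) (frontier V)
        + dist (emb x) (emb z) := infDist_le_infDist_add_dist
    rw [dist_eq_norm] at t2 t3
    have e1 : ‖emb y - emb z‖ = ‖emb z - emb y‖ := norm_sub_rev _ _
    have e2 : ‖emb z - emb x‖ = ‖emb x - emb z‖ := norm_sub_rev _ _
    have n1 : 0 ≤ ‖emb x - emb z‖ := norm_nonneg _
    have n2 : 0 ≤ ‖emb z - emb y‖ := norm_nonneg _
    have n3 : 0 ≤ infDist (emb x) (frontier U) := infDist_nonneg
    have n4 : 0 ≤ infDist (emb z) (frontier U) := infDist_nonneg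
    have n5 : 0 ≤ infDist (emb z) (frontier V) := infDist_nonneg
    have n6 : 0 ≤ infDist (emb y) (frontier V) := infDist_nonneg
    nlinarith [mul_le_mul_of_nonneg_left t1 hc.le, mul_le_mul_of_nonneg_left t2 hc.le,
      mul_le_mul_of_nonneg_left t3 hc.le, mul_le_mul_of_nonneg_left n1 hc.le,
      mul_le_mul_of_nonneg_left n2 hc.le, mul_le_mul_of_nonneg_left n4 hc.le,
      mul_le_mul_of_nonneg_left n5 hc.le]
  -- summability of the majorant
  have hsum2 : Summable (fun z : ℤ × ℤ => Real.exp (-(μ/3) * ‖emb z - emb x‖) * E) := by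
    apply Summable.mul_right
    have := (Equiv.addRight x).summable_iff
      (f := fun z : ℤ × ℤ => Real.exp (-(μ/3) * ‖emb z - emb x‖))
    rw [← this]
    refine hsum.congr fun w => ?_
    simp [Equiv.coe_addRight, emb_add]
  have hsum1 : Summable (fun z : ℤ × ℤ =>
      Real.exp (-μ * (‖emb x - emb z‖ + infDist (emb x) (frontier U)
          + infDist (emb z) (frontier U)))
        * Real.exp (-μ * (‖emb z - emb y‖ + infDist (emb z) (frontier V)
          + infDist (emb y) (frontier V)))) :=
    hsum2.of_nonneg_of_le (fun z => by positivity) key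
  calc (∑' z : ℤ × ℤ, _) ≤ ∑' z : ℤ × ℤ, Real.exp (-(μ/3) * ‖emb z - emb x‖) * E :=
        Summable.tsum_le_tsum key hsum1 hsum2
    _ = (∑' z : ℤ × ℤ, Real.exp (-(μ/3) * ‖emb z - emb x‖)) * E := tsum_mul_right
    _ = (∑' w : ℤ × ℤ, Real.exp (-(μ / 3) * ‖emb w‖)) * E := by
        congr 1
        rw [← (Equiv.addRight x).tsum_eq
          (f := fun z : ℤ × ℤ => Real.exp (-(μ/3) * ‖emb z - emb x‖))]
        refine tsum_congr fun w => ?_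
        simp [Equiv.coe_addRight, emb_add]
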